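/- Over the real numbers, the following family of sequences in ℕ → ℝ is linearly independent over ℝ: (a) the delta sequences δ_n for n ∈ ℕ, where δ_n(k) = 1 if k = n and 0 otherwise; (b) the sequences k ↦ k^i·ρ^k for each nonzero real ρ and each i ∈ ℕ; (c) the sequences k ↦ k^i·r^k·cos(kθ) for each real r > 0, each θ with 0 < θ < π, and each i ∈ ℕ; and (d) the sequences k ↦ k^i·r^k·sin(kθ) for each real r > 0, each θ with 0 < θ < π, and each i ∈ ℕ. -/

import Mathlib

/-!
The shift `S f = f (· + 1)` on sequences has `δ_n` in its generalized eigenspace for the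
eigenvalue `0` and `k ↦ k ^ i * z ^ k` in the one for `z`, because `S - z` acts on
`k ↦ g k * z ^ k` as `z` times the forward difference of `g`. Generalized eigenspaces for distinct
eigenvalues are independent, and inside one of them these sequences are independent (a polynomial
vanishing on `ℕ` is zero), so together they are linearly independent over `ℂ`. The cosine and sine
sequences of `(r, θ)` are `(w + w') / 2` and `(w - w') / 2i`, where `w` and `w'` are the sequences
of the conjugate eigenvalues `r e^{± iθ}`; this change of basis preserves independence over `ℂ`,
and real sequences that are independent over `ℂ` are independent over `ℝ`.
-/

open Polynomial Module fwdDiff Finsupp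

theorem iSupIndep.linearIndependent_sigma {R M η : Type*} [Ring R] [AddCommGroup M] [Module R M]
    {ιs : η → Type*} {p : η → Submodule R M} (hp : iSupIndep p) {f : ∀ j, ιs j → M}
    (hf : ∀ j, LinearIndependent R (f j)) (hfp : ∀ j i, f j i ∈ p j) :
    LinearIndependent R fun ji : Σ j, ιs j => f ji.1 ji.2 := by
  have hspan : ∀ j, Submodule.span R (Set.range (f j)) ≤ p j := fun j =>
    Submodule.span_le.2 (Set.range_subset_iff.2 (hfp j))
  exact linearIndependent_iUnion_finite hf fun j t _ hj =>
    (hp.disjoint_biSup hj).mono (hspan j) (iSup₂_mono fun i _ => hspan i)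

theorem Finsupp.linearCombination_sumElim {R M α β : Type*} [Semiring R] [AddCommMonoid M]
    [Module R M] (f : α → M) (g : β → M) (l : α →₀ R) (m : β →₀ R) :
    linearCombination R (Sum.elim f g) (sumElim l m) =
      linearCombination R f l + linearCombination R g m := by
  rw [sumElim_eq_add, map_add, linearCombination_mapDomain, linearCombination_mapDomain]
  rfl

theorem LinearIndependent.sumElim_add_sub {K V ι κ : Type*} [Field K] [NeZero (2 : K)]
    [AddCommGroup V] [Module K V] {a : ι → V} {b c : κ → V}
    (h : LinearIndependent K (Sum.elim a (Sum.elim b c))) :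
    LinearIndependent K (Sum.elim a (Sum.elim (b + c) (b - c))) := by
  rw [linearIndependent_iff] at h ⊢
  intro l hl
  obtain ⟨l₀, l', rfl⟩ : ∃ l₀ l', l = sumElim l₀ l' :=
    ⟨_, _, (comapDomain_sumElim_comapDomain l).symm⟩
  obtain ⟨l₁, l₂, rfl⟩ : ∃ l₁ l₂, l' = sumElim l₁ l₂ :=
    ⟨_, _, (comapDomain_sumElim_comapDomain l').symm⟩
  have hzero := h (sumElim l₀ (sumElim (l₁ + l₂) (l₁ - l₂))) <| by
    rw [← hl]
    simp only [linearCombination_sumElim, map_add, map_sub]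
    simp only [linearCombination_apply, Pi.add_apply, Pi.sub_apply, smul_add, smul_sub,
      Finsupp.sum_add, Finsupp.sum_sub]
    abel
  ext (i | j | j)
  · simpa using DFunLike.congr_fun hzero (.inl i)
  all_goals
    have hsum : l₁ j + l₂ j = 0 := by simpa using DFunLike.congr_fun hzero (.inr (.inl j))
    have hdiff : l₁ j - l₂ j = 0 := by simpa using DFunLike.congr_fun hzero (.inr (.inr j))
  · simpa [two_ne_zero] using (by linear_combination hsum + hdiff : 2 * l₁ j = 0)
  · simpa [two_ne_zero] using (by linear_combination hsum - hdiff : 2 * l₂ j = 0)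

section Shift

variable {R : Type*} [CommRing R]

variable (R) in
def seqShift : End R (ℕ → R) := LinearMap.funLeft R R (· + 1)

theorem seqShift_pow_apply (m : ℕ) (f : ℕ → R) (k : ℕ) : (seqShift R ^ m) f k = f (k + m) := by
  induction m generalizing f with
  | zero => rfl
  | succ m ih => rw [pow_succ, End.mul_apply, ih]; rfl

theorem single_mem_maxGenEigenspace_seqShift (i : ℕ) :
    Pi.single i 1 ∈ (seqShift R).maxGenEigenspace 0 := by
  rw [End.mem_maxGenEigenspace]
  refine ⟨i + 1, funext fun k => ?_⟩
  simp only [zero_smul, sub_zero, seqShift_pow_apply, Pi.single_apply, Pi.zero_apply,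
    ite_eq_right_iff]
  omega

theorem seqShift_sub_smul_one_mul_pow (z : R) (g : ℕ → R) :
    (seqShift R - z • 1) (fun k => g k * z ^ k) = fun k => (z • Δ_[1] g) k * z ^ k := by
  funext k
  simp only [LinearMap.sub_apply, LinearMap.smul_apply, End.one_apply, Pi.sub_apply,
    Pi.smul_apply, smul_eq_mul, fwdDiff]
  change g (k + 1) * z ^ (k + 1) - _ = _
  ring

theorem seqShift_sub_smul_one_pow_mul_pow (z : R) (g : ℕ → R) (n : ℕ) :
    ((seqShift R - z • 1) ^ n) (fun k => g k * z ^ k) =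
      fun k => z ^ n * (Δ_[1])^[n] g k * z ^ k := by
  induction n generalizing g with
  | zero => simp
  | succ n ih =>
    rw [pow_succ, End.mul_apply, seqShift_sub_smul_one_mul_pow, ih,
      fwdDiff_iter_const_smul, Function.iterate_succ_apply]
    funext k
    simp only [Pi.smul_apply, smul_eq_mul]
    ring

theorem fwdDiff_iter_natCast_pow_eq_zero {i n : ℕ} (h : i < n) :
    (Δ_[1])^[n] (fun k : ℕ => (k : R) ^ i) = 0 := by
  have hcomm : Function.Semiconj (· ∘ Nat.cast) (Δ_[1] : (R → R) → R → R)
      (Δ_[1] : (ℕ → R) → ℕ → R) := fun f => by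
    funext k; simp [fwdDiff]
  have := (hcomm.iterate_right n (fun r : R => r ^ i)).symm
  rw [fwdDiff_iter_pow_eq_zero_of_lt h] at this
  exact this

theorem natCast_pow_mul_pow_mem_maxGenEigenspace_seqShift (z : R) (i : ℕ) :
    (fun k : ℕ => (k : R) ^ i * z ^ k) ∈ (seqShift R).maxGenEigenspace z := by
  rw [End.mem_maxGenEigenspace]
  refine ⟨i + 1, ?_⟩
  rw [seqShift_sub_smul_one_pow_mul_pow, fwdDiff_iter_natCast_pow_eq_zero (Nat.lt_succ_self i)]
  funext k
  simp

theorem linearIndependent_natCast_pow_mul_pow [IsDomain R] [CharZero R] {z : R} (hz : z ≠ 0) :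
    LinearIndependent R fun i : ℕ => fun k : ℕ => (k : R) ^ i * z ^ k := by
  let evalMulPow : R[X] →ₗ[R] ℕ → R :=
    { toFun := fun p k => p.eval (k : R) * z ^ k
      map_add' := fun p q => by funext k; simp [add_mul]
      map_smul' := fun c p => by funext k; simp [mul_assoc] }
  have hker : LinearMap.ker evalMulPow = ⊥ := by
    refine LinearMap.ker_eq_bot'.2 fun p hp => p.eq_zero_of_infinite_isRoot ?_
    refine (Set.infinite_range_of_injective Nat.cast_injective).mono ?_
    rintro _ ⟨k, rfl⟩
    simpa [evalMulPow, hz] using congrFun hp k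
  have hmonomial : (fun i : ℕ => fun k : ℕ => (k : R) ^ i * z ^ k) =
      evalMulPow ∘ basisMonomials R := by
    funext i k
    simp [evalMulPow]
  rw [hmonomial]
  exact (basisMonomials R).linearIndependent.map' evalMulPow hker

variable (R) in
open Classical in
/-- At `z = 0`, where `k ↦ k ^ i * 0 ^ k` is `δ_0` or `0`, the deltas take the place of these
sequences. -/
noncomputable def expPolySeq (z : R) (i : ℕ) : ℕ → R :=
  if z = 0 then Pi.single i 1 else fun k => (k : R) ^ i * z ^ k

theorem expPolySeq_mem_maxGenEigenspace (z : R) (i : ℕ) :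
    expPolySeq R z i ∈ (seqShift R).maxGenEigenspace z := by
  unfold expPolySeq
  split_ifs with hz
  · exact hz ▸ single_mem_maxGenEigenspace_seqShift i
  · exact natCast_pow_mul_pow_mem_maxGenEigenspace_seqShift z i

theorem linearIndependent_expPolySeq_eigenvalue [IsDomain R] [CharZero R] (z : R) :
    LinearIndependent R (expPolySeq R z) := by
  by_cases hz : z = 0
  · rw [show expPolySeq R z = fun i => Pi.single i 1 from funext fun i => if_pos hz]
    exact Pi.linearIndependent_single_one ℕ R
  · rw [show expPolySeq R z = _ from funext fun i => if_neg hz]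
    exact linearIndependent_natCast_pow_mul_pow hz

theorem linearIndependent_expPolySeq [IsDomain R] [CharZero R] :
    LinearIndependent R fun p : R × ℕ => expPolySeq R p.1 p.2 :=
  ((End.independent_maxGenEigenspace (seqShift R)).linearIndependent_sigma
    linearIndependent_expPolySeq_eigenvalue expPolySeq_mem_maxGenEigenspace).comp
    (Equiv.sigmaEquivProd R ℕ).symm (Equiv.injective _)

end Shift

theorem Complex.polarCoord_symm_pow (p : ℝ × ℝ) (k : ℕ) :
    Complex.polarCoord.symm p ^ k = Complex.polarCoord.symm (p.1 ^ k, k * p.2) := by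
  simp only [Complex.polarCoord_symm_apply, mul_pow, Complex.ofReal_cos, Complex.ofReal_sin,
    Complex.cos_add_sin_mul_I_pow]
  push_cast
  ring_nf

theorem Complex.polarCoord_symm_im (p : ℝ × ℝ) :
    (Complex.polarCoord.symm p).im = p.1 * Real.sin p.2 := by
  simp [-Complex.ofReal_cos, -Complex.ofReal_sin]

theorem expPolySeq_polarCoord_symm {r : ℝ} (hr : r ≠ 0) (θ : ℝ) (i k : ℕ) :
    expPolySeq ℂ (Complex.polarCoord.symm (r, θ)) i k =
      (k : ℂ) ^ i * r ^ k * (Real.cos (k * θ) + Real.sin (k * θ) * Complex.I) := by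
  have hz : Complex.polarCoord.symm (r, θ) ≠ 0 := by
    rw [← norm_ne_zero_iff, Complex.norm_polarCoord_symm]
    exact abs_ne_zero.2 hr
  rw [expPolySeq, if_neg hz, Complex.polarCoord_symm_pow, Complex.polarCoord_symm_apply]
  push_cast
  ring

theorem expPolySeq_polarCoord_symm_add_neg {r : ℝ} (hr : r ≠ 0) (θ : ℝ) (i k : ℕ) :
    2⁻¹ * (expPolySeq ℂ (Complex.polarCoord.symm (r, θ)) i k +
        expPolySeq ℂ (Complex.polarCoord.symm (r, -θ)) i k) =
      (((k : ℝ) ^ i * r ^ k * Real.cos (k * θ) : ℝ) : ℂ) := by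
  rw [expPolySeq_polarCoord_symm hr, expPolySeq_polarCoord_symm hr, mul_neg, Real.cos_neg,
    Real.sin_neg]
  push_cast
  ring

theorem expPolySeq_polarCoord_symm_sub_neg {r : ℝ} (hr : r ≠ 0) (θ : ℝ) (i k : ℕ) :
    (2 * Complex.I)⁻¹ * (expPolySeq ℂ (Complex.polarCoord.symm (r, θ)) i k -
        expPolySeq ℂ (Complex.polarCoord.symm (r, -θ)) i k) =
      (((k : ℝ) ^ i * r ^ k * Real.sin (k * θ) : ℝ) : ℂ) := by
  rw [expPolySeq_polarCoord_symm hr, expPolySeq_polarCoord_symm hr, mul_neg, Real.cos_neg,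
    Real.sin_neg]
  field_simp
  push_cast
  ring

abbrev UpperPolar : Type := {r : ℝ // 0 < r} × {θ : ℝ // 0 < θ ∧ θ < Real.pi}

namespace UpperPolar

theorem mem_polarCoord_target (q : UpperPolar) :
    ((q.1 : ℝ), (q.2 : ℝ)) ∈ Complex.polarCoord.target ∧
      ((q.1 : ℝ), -(q.2 : ℝ)) ∈ Complex.polarCoord.target := by
  obtain ⟨⟨r, hr⟩, ⟨θ, hθ₀, hθπ⟩⟩ := q
  simp only [Complex.polarCoord_target, Set.mem_prod, Set.mem_Ioi, Set.mem_Ioo]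
  exact ⟨⟨hr, by linarith, hθπ⟩, ⟨hr, by linarith, by linarith⟩⟩

theorem polarCoord_symm_im_pos (q : UpperPolar) :
    0 < (Complex.polarCoord.symm (q.1, q.2)).im := by
  rw [Complex.polarCoord_symm_im]
  exact mul_pos q.1.2 (Real.sin_pos_of_pos_of_lt_pi q.2.2.1 q.2.2.2)

theorem polarCoord_symm_neg_im_neg (q : UpperPolar) :
    (Complex.polarCoord.symm (q.1, -(q.2 : ℝ))).im < 0 := by
  rw [Complex.polarCoord_symm_im, Real.sin_neg, mul_neg, neg_lt_zero]
  exact mul_pos q.1.2 (Real.sin_pos_of_pos_of_lt_pi q.2.2.1 q.2.2.2)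

theorem injective_polarCoord_symm :
    Function.Injective fun q : UpperPolar => Complex.polarCoord.symm (q.1, q.2) := by
  intro q q' h
  have := Complex.polarCoord.symm.injOn (by simpa using (mem_polarCoord_target q).1)
    (by simpa using (mem_polarCoord_target q').1) h
  simp only [Prod.mk.injEq] at this
  exact Prod.ext (Subtype.ext this.1) (Subtype.ext this.2)

theorem injective_polarCoord_symm_neg :
    Function.Injective fun q : UpperPolar => Complex.polarCoord.symm (q.1, -(q.2 : ℝ)) := by
  intro q q' h
  have := Complex.polarCoord.symm.injOn (by simpa using (mem_polarCoord_target q).2)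
    (by simpa using (mem_polarCoord_target q').2) h
  simp only [Prod.mk.injEq, neg_inj] at this
  exact Prod.ext (Subtype.ext this.1) (Subtype.ext this.2)

end UpperPolar

noncomputable def shiftEigenLabel :
    (ℕ ⊕ {ρ : ℝ // ρ ≠ 0} × ℕ) ⊕ (UpperPolar × ℕ ⊕ UpperPolar × ℕ) → ℂ × ℕ :=
  Sum.elim (Sum.elim (fun n => (0, n)) (fun q => ((q.1 : ℝ), q.2)))
    (Sum.elim (fun q => (Complex.polarCoord.symm (q.1.1, q.1.2), q.2))
      (fun q => (Complex.polarCoord.symm (q.1.1, -(q.1.2 : ℝ)), q.2)))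

theorem injective_shiftEigenLabel : Function.Injective shiftEigenLabel := by
  refine .sumElim (.sumElim ?_ ?_ ?_) (.sumElim ?_ ?_ ?_) ?_
  · intro n n' h
    simpa using h
  · intro q q' h
    simp only [Prod.mk.injEq, Complex.ofReal_inj] at h
    exact Prod.ext (Subtype.ext h.1) h.2
  · intro n q h
    exact q.1.2 (by simpa using (congrArg Prod.fst h).symm)
  · exact UpperPolar.injective_polarCoord_symm.prodMap Function.injective_id
  · exact UpperPolar.injective_polarCoord_symm_neg.prodMap Function.injective_id
  · intro q q' h
    have := congrArg (Complex.im ∘ Prod.fst) h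
    simp only [Function.comp_apply] at this
    linarith [q.1.polarCoord_symm_im_pos, q'.1.polarCoord_symm_neg_im_neg]
  · rintro (n | q) (q' | q') h <;> have := congrArg (Complex.im ∘ Prod.fst) h <;>
      simp only [Function.comp_apply, Sum.elim_inl, Sum.elim_inr, Complex.zero_im,
        Complex.ofReal_im] at this
    · linarith [q'.1.polarCoord_symm_im_pos]
    · linarith [q'.1.polarCoord_symm_neg_im_neg]
    · linarith [q'.1.polarCoord_symm_im_pos]
    · linarith [q'.1.polarCoord_symm_neg_im_neg]

/-- The family of real sequences consisting of the delta sequences `δ_n`, the sequences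
`k ↦ k^i ρ^k` (`ρ ≠ 0`), the sequences `k ↦ k^i r^k cos(kθ)` and `k ↦ k^i r^k sin(kθ)`
(`r > 0`, `0 < θ < π`) is linearly independent over `ℝ`. -/
theorem real_recurrence_basis_linearIndependent :
    LinearIndependent ℝ
      (Sum.elim
        (fun nn : ℕ => fun k : ℕ => if k = nn then (1 : ℝ) else 0)
        (Sum.elim
          (fun q : {ρ : ℝ // ρ ≠ 0} × ℕ => fun k : ℕ =>
            (k : ℝ) ^ q.2 * (q.1 : ℝ) ^ k)
          (Sum.elim
            (fun q : ({r : ℝ // 0 < r} × {θ : ℝ // 0 < θ ∧ θ < Real.pi}) × ℕ => fun k : ℕ =>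
              (k : ℝ) ^ q.2 * (q.1.1 : ℝ) ^ k * Real.cos (k * (q.1.2 : ℝ)))
            (fun q : ({r : ℝ // 0 < r} × {θ : ℝ // 0 < θ ∧ θ < Real.pi}) × ℕ => fun k : ℕ =>
              (k : ℝ) ^ q.2 * (q.1.1 : ℝ) ^ k * Real.sin (k * (q.1.2 : ℝ)))))) := by
  refine .of_comp ((Algebra.linearMap ℝ ℂ).compLeft ℕ) (.restrict_scalars' (K := ℂ) ℝ ?_)
  have hC := (linearIndependent_expPolySeq (R := ℂ)).comp _ injective_shiftEigenLabel
  simp only [shiftEigenLabel, Sum.comp_elim] at hC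
  let weight : (ℕ ⊕ {ρ : ℝ // ρ ≠ 0} × ℕ) ⊕ (UpperPolar × ℕ ⊕ UpperPolar × ℕ) → ℂˣ :=
    Sum.elim 1 (Sum.elim (fun _ => Units.mk0 2⁻¹ (by norm_num))
      (fun _ => Units.mk0 (2 * Complex.I)⁻¹ (by simp)))
  refine (linearIndependent_equiv' (Equiv.sumAssoc _ _ _) ?_).mp
    (hC.sumElim_add_sub.units_smul weight)
  funext j k
  rcases j with (n | q) | q | q <;>
    simp only [weight, Function.comp_apply, Equiv.sumAssoc_apply_inl_inl,
      Equiv.sumAssoc_apply_inl_inr, Equiv.sumAssoc_apply_inr, Sum.elim_inl, Sum.elim_inr,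
      LinearMap.compLeft_apply, Algebra.linearMap_apply, Complex.coe_algebraMap, Pi.smul_apply',
      Pi.add_apply, Pi.sub_apply, Pi.one_apply, one_smul, Units.smul_mk0]
  · simp [expPolySeq, Pi.single_apply, apply_ite Complex.ofReal]
  · simp [expPolySeq, q.1.2]
  · exact (expPolySeq_polarCoord_symm_add_neg q.1.1.2.ne' _ _ _).symm
  · exact (expPolySeq_polarCoord_symm_sub_neg q.1.1.2.ne' _ _ _).symm
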